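/- In the FLAG setting, for every u ∈ C: Σ_{k=1}^T [ (η_{k−1}²·L_{k−1} − η_k²·L_k + η_k)·F(y_k) − η_k·F(u) ] + η_T²·L_T·F(y_{T+1}) ≤ Σ_{k=1}^T D·L·η_k²·L_k/T³ + (D/2)·(Σ_{i=1}^d s_T(i) + δ·d), where η₀²·L₀ is interpreted as 0. -/

import Mathlib

/-
Each iteration couples a proximal-gradient step with a mirror-descent step. The three-point
property of the prox objective, the descent lemma for `f` and the gradient inequality give
`F(y_{k+1}) ≤ F(w) + ⟨p_k, x_k - w⟩ - ‖p_k‖² / (2L)` for every `w ∈ C`, while the mirror step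
with Young's inequality in the norm of `S_k` gives
`η_k ⟨p_k, z_k - u⟩ ≤ Φ_k(z_k) - Φ_k(z_{k+1}) + η_k² L_k ‖p_k‖² / (2L)`, where
`Φ_k(v) = ½ ‖u - v‖²_{S_k}`. Taking the first bound at `w = u` and at `w = y_k` with the weights
`η_k` and `η_k (η_k L_k - 1) ≥ 0` and adding the binary-search guarantee, the `‖p_k‖²` terms
cancel. Summed over `k`, the potentials telescope up to the growth of `S_k`, which the diameter
bound charges to `D/2 · tr S_T`.
-/

open scoped RealInnerProductSpace
open Filter Topology AffineMap

namespace QuadraticMap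

variable {E : Type*} [AddCommGroup E] [Module ℝ E]

theorem map_one_sub_smul_add_smul (Q : QuadraticMap ℝ E ℝ) (a b : E) (t : ℝ) :
    Q ((1 - t) • a + t • b) = (1 - t) * Q a + t * Q b - t * (1 - t) * Q (b - a) := by
  have hadd : ∀ x y, Q (x + y) = Q x + Q y + polar Q x y := fun x y => by
    simp only [polar]; ring
  rw [hadd, sub_eq_add_neg b, hadd, Q.map_neg, Q.map_smul, Q.map_smul, polar_smul_left,
    polar_smul_right, polar_neg_right, polar_comm Q b a]
  simp only [smul_eq_mul]
  ring

end QuadraticMap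

theorem ConvexOn.add_map_sub_le_of_isMinOn {E : Type*} [AddCommGroup E] [Module ℝ E]
    {C : Set E} {c : E → ℝ} (hc : ConvexOn ℝ C c) (Q : QuadraticMap ℝ E ℝ)
    {b m v : E} (hm : m ∈ C) (hv : v ∈ C)
    (hmin : IsMinOn (fun w => c w + Q (w - b)) C m) :
    c m + Q (m - b) + Q (v - m) ≤ c v + Q (v - b) := by
  have hstep : ∀ t ∈ Set.Ioc (0 : ℝ) 1,
      (1 - t) * Q (v - m) ≤ c v + Q (v - b) - (c m + Q (m - b)) := by
    rintro t ⟨ht0, ht1⟩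
    have hmt := hmin (hc.1 hm hv (by linarith : 0 ≤ 1 - t) ht0.le (by ring : 1 - t + t = 1))
    have hct := hc.2 hm hv (by linarith : 0 ≤ 1 - t) ht0.le (by ring : 1 - t + t = 1)
    have hQt := Q.map_one_sub_smul_add_smul (m - b) (v - b) t
    rw [show (1 - t) • (m - b) + t • (v - b) = (1 - t) • m + t • v - b by module,
      sub_sub_sub_cancel_right] at hQt
    simp only [smul_eq_mul] at hct
    have : t * ((1 - t) * Q (v - m)) ≤ t * (c v + Q (v - b) - (c m + Q (m - b))) := by
      change c m + Q (m - b) ≤ c _ + Q (_ - b) at hmt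
      nlinarith
    exact le_of_mul_le_mul_left this ht0
  have hlim : Tendsto (fun t : ℝ => (1 - t) * Q (v - m)) (𝓝[>] 0) (𝓝 (Q (v - m))) := by
    have : Continuous fun t : ℝ => (1 - t) * Q (v - m) := by fun_prop
    simpa using (this.tendsto 0).mono_left nhdsWithin_le_nhds
  have := le_of_tendsto hlim (eventually_of_mem (Ioc_mem_nhdsGT zero_lt_one) hstep)
  linarith

section Gradient

variable {E : Type*} [NormedAddCommGroup E] [InnerProductSpace ℝ E] [CompleteSpace E]
  {C : Set E} {f : E → ℝ}

theorem HasGradientAt.hasDerivAt_comp_lineMap {g x w : E} {t : ℝ}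
    (hf : HasGradientAt f g (lineMap x w t)) :
    HasDerivAt (fun s : ℝ => f (lineMap x w s)) ⟪g, w - x⟫ t :=
  hf.hasFDerivAt.comp_hasDerivAt t hasDerivAt_lineMap

theorem ConvexOn.add_inner_le_of_hasGradientAt (hf : ConvexOn ℝ C f) {g x w : E}
    (hx : x ∈ C) (hw : w ∈ C) (hg : HasGradientAt f g x) :
    f x + ⟪g, w - x⟫ ≤ f w := by
  have hline : ConvexOn ℝ (lineMap x w ⁻¹' C) (f ∘ lineMap x w) := hf.comp_affineMap _
  have := hline.le_slope_of_hasDerivAt (x := 0) (y := 1) (by simpa) (by simpa) one_pos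
    (HasGradientAt.hasDerivAt_comp_lineMap (by simpa using hg))
  simp only [slope_def_field, Function.comp_apply, lineMap_apply_zero, lineMap_apply_one,
    sub_zero, div_one] at this
  linarith

theorem le_add_inner_add_sq_of_lipschitz_gradient (hC : Convex ℝ C) {f' : E → E}
    (hf : ∀ v, HasGradientAt f (f' v) v) {L : ℝ}
    (hL : ∀ a ∈ C, ∀ b ∈ C, ‖f' a - f' b‖ ≤ L * ‖a - b‖) {x w : E} (hx : x ∈ C) (hw : w ∈ C) :
    f w ≤ f x + ⟪f' x, w - x⟫ + L / 2 * ‖w - x‖ ^ 2 := by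
  let G : ℝ → ℝ := fun t => f (lineMap x w t) - t * ⟪f' x, w - x⟫ - t ^ 2 * (L / 2 * ‖w - x‖ ^ 2)
  have hG : ∀ t, HasDerivAt G
      (⟪f' (lineMap x w t) - f' x, w - x⟫ - t * (L * ‖w - x‖ ^ 2)) t := by
    intro t
    have := (((hf (lineMap x w t)).hasDerivAt_comp_lineMap).sub
      ((hasDerivAt_id t).mul_const ⟪f' x, w - x⟫)).sub
      ((hasDerivAt_pow 2 t).mul_const (L / 2 * ‖w - x‖ ^ 2))
    exact this.congr_deriv (by rw [inner_sub_left]; norm_num; ring)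
  have hanti : AntitoneOn G (Set.Icc 0 1) := by
    refine antitoneOn_of_hasDerivWithinAt_nonpos (convex_Icc 0 1)
      (fun t _ => (hG t).continuousAt.continuousWithinAt) (fun t _ => (hG t).hasDerivWithinAt) ?_
    intro t ht
    rw [interior_Icc] at ht
    have hxt : lineMap x w t ∈ C := hC.lineMap_mem hx hw (Set.Ioo_subset_Icc_self ht)
    have hdist : ‖lineMap x w t - x‖ = t * ‖w - x‖ := by
      rw [lineMap_apply_module', add_sub_cancel_right, norm_smul, Real.norm_eq_abs,
        abs_of_pos ht.1]
    rw [sub_nonpos]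
    calc ⟪f' (lineMap x w t) - f' x, w - x⟫
        ≤ ‖f' (lineMap x w t) - f' x‖ * ‖w - x‖ := real_inner_le_norm _ _
      _ ≤ L * (t * ‖w - x‖) * ‖w - x‖ := by
          rw [← hdist]; exact mul_le_mul_of_nonneg_right (hL _ hxt _ hx) (norm_nonneg _)
      _ = t * (L * ‖w - x‖ ^ 2) := by ring
  have := hanti (by simp) (by simp) zero_le_one
  simp only [G, lineMap_apply_one, lineMap_apply_zero, one_mul, one_pow, zero_mul, sub_zero, ne_eq,
    OfNat.ofNat_ne_zero, not_false_eq_true, zero_pow] at this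
  linarith

end Gradient

theorem convexOn_inner_sub {E : Type*} [NormedAddCommGroup E] [InnerProductSpace ℝ E]
    {C : Set E} (hC : Convex ℝ C) (a x : E) : ConvexOn ℝ C (fun w => ⟪a, w - x⟫) :=
  (((innerₗ E a).convexOn hC).add_const (-⟪a, x⟫)).congr fun w _ => by
    simp [sub_eq_add_neg, inner_add_right, inner_neg_right]

theorem proxGradient_le {E : Type*} [NormedAddCommGroup E] [InnerProductSpace ℝ E] [CompleteSpace E]
    {C : Set E} (hC : Convex ℝ C) {f h : E → ℝ} {f' : E → E} {L : ℝ} (hL : 0 < L)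
    (hf : ConvexOn ℝ C f) (hfg : ∀ v, HasGradientAt f (f' v) v)
    (hfL : ∀ a ∈ C, ∀ b ∈ C, ‖f' a - f' b‖ ≤ L * ‖a - b‖) (hh : ConvexOn ℝ C h)
    {x y p w : E} (hx : x ∈ C) (hy : y ∈ C) (hw : w ∈ C)
    (hmin : IsMinOn (fun w => h w + ⟪f' x, w - x⟫ + L / 2 * ‖w - x‖ ^ 2) C y)
    (hp : p = -L • (y - x)) :
    f y + h y ≤ f w + h w + ⟪p, x - w⟫ - ‖p‖ ^ 2 / (2 * L) := by
  let Q : QuadraticMap ℝ E ℝ := (L / 2) • LinearMap.BilinMap.toQuadraticMap (innerₗ E)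
  have hQ : ∀ v, Q v = L / 2 * ‖v‖ ^ 2 := fun v => by
    simp [Q]
  have hc : ConvexOn ℝ C (fun w => h w + ⟪f' x, w - x⟫) := hh.add (convexOn_inner_sub hC (f' x) x)
  have hthree := hc.add_map_sub_le_of_isMinOn Q hy hw (b := x) (by simpa only [hQ] using hmin)
  simp only [hQ] at hthree
  have hdesc := le_add_inner_add_sq_of_lipschitz_gradient hC hfg hfL hx hy
  have hgrad := hf.add_inner_le_of_hasGradientAt hx hw (hfg x)
  have hident : L / 2 * ‖w - x‖ ^ 2 - L / 2 * ‖w - y‖ ^ 2 = ⟪p, x - w⟫ - ‖p‖ ^ 2 / (2 * L) := by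
    rw [hp, show w - x = (w - y) + (y - x) by abel, show x - w = -((w - y) + (y - x)) by abel,
      norm_add_sq_real, norm_smul, inner_neg_right, inner_add_right, real_inner_smul_left,
      real_inner_smul_left, real_inner_self_eq_norm_sq, real_inner_comm (w - y), Real.norm_eq_abs,
      abs_neg, abs_of_pos hL]
    field_simp
    ring
  linarith

theorem linearCoupling_le {E : Type*} [NormedAddCommGroup E] [InnerProductSpace ℝ E]
    {F : E → ℝ} {x y y' z u p : E} {η ℓ ε r R : ℝ}
    (hu : F y' ≤ F u + ⟪p, x - u⟫ - r) (hy : F y' ≤ F y + ⟪p, x - y⟫ - r)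
    (hbs : ⟪p, x - z⟫ ≤ (η * ℓ - 1) * ⟪p, y - x⟫ + ε)
    (hmd : η * ⟪p, z - u⟫ ≤ R + η ^ 2 * ℓ * r) (hη : 0 ≤ η) (hηℓ : 1 ≤ η * ℓ) :
    (η - η ^ 2 * ℓ) * F y - η * F u + η ^ 2 * ℓ * F y' ≤ η * ε + R := by
  have hsplit : ⟪p, x - u⟫ = ⟪p, x - z⟫ + ⟪p, z - u⟫ := by
    rw [← inner_add_right, sub_add_sub_cancel]
  have hswap : ⟪p, x - y⟫ = -⟪p, y - x⟫ := by rw [← inner_neg_right, neg_sub]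
  have h1 := mul_le_mul_of_nonneg_left hu hη
  have h2 := mul_le_mul_of_nonneg_left hy (mul_nonneg hη (sub_nonneg.2 hηℓ))
  have h3 := mul_le_mul_of_nonneg_left hbs hη
  rw [hsplit] at h1
  rw [hswap] at h2
  linarith

theorem sum_Icc_sub_le_of_succ_sub_le {a b B : ℕ → ℝ} {T : ℕ} (hT : 1 ≤ T) (h1 : a 1 ≤ B 1)
    (hstep : ∀ k, 1 ≤ k → k < T → a (k + 1) - b k ≤ B (k + 1) - B k) (hbT : 0 ≤ b T) :
    ∑ k ∈ Finset.Icc 1 T, (a k - b k) ≤ B T := by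
  suffices ∀ n, 1 ≤ n → n ≤ T → ∑ k ∈ Finset.Icc 1 n, (a k - b k) + b n ≤ B n by
    linarith [this T hT le_rfl]
  intro n hn
  induction n, hn using Nat.le_induction with
  | base => simpa using fun _ => h1
  | succ n hn ih =>
    intro hnT
    rw [Finset.sum_Icc_succ_top (by omega)]
    linarith [ih (by omega), hstep n hn hnT]

theorem sum_Icc_ite_pred_mul_add (c Y : ℕ → ℝ) {T : ℕ} (hT : 1 ≤ T) :
    ∑ k ∈ Finset.Icc 1 T, (if k = 1 then 0 else c (k - 1)) * Y k + c T * Y (T + 1)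
      = ∑ k ∈ Finset.Icc 1 T, c k * Y (k + 1) := by
  induction T, hT using Nat.le_induction with
  | base => simp
  | succ n hn ih =>
    rw [Finset.sum_Icc_succ_top (by omega), Finset.sum_Icc_succ_top (by omega), ← ih,
      if_neg (by omega), Nat.add_sub_cancel]

theorem one_div_le_one_div_two_mul_add_sqrt {ℓ c : ℝ} (hℓ : 0 < ℓ) (hc : 0 ≤ c) :
    1 / ℓ ≤ 1 / (2 * ℓ) + √(1 / (4 * ℓ ^ 2) + c) := by
  have : 1 / (2 * ℓ) ≤ √(1 / (4 * ℓ ^ 2) + c) := by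
    rw [Real.le_sqrt (by positivity) (by positivity)]
    field_simp
    nlinarith [mul_nonneg hc (sq_nonneg ℓ)]
  calc 1 / ℓ = 1 / (2 * ℓ) + 1 / (2 * ℓ) := by field_simp; ring
    _ ≤ _ := by gcongr

theorem flag_stepsize_bounds {ℓ η : ℕ → ℝ} {T : ℕ} (hℓ : ∀ k, 1 ≤ k → k ≤ T → 0 < ℓ k)
    (hη1 : η 1 = 1 / ℓ 1)
    (hηk : ∀ k, 2 ≤ k → k ≤ T →
      η k = 1 / (2 * ℓ k) + √(1 / (4 * ℓ k ^ 2) + η (k - 1) ^ 2 * ℓ (k - 1) / ℓ k)) :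
    ∀ k, 1 ≤ k → k ≤ T → 0 ≤ η k ∧ 1 ≤ η k * ℓ k := by
  intro k hk1 hkT
  have hℓk := hℓ k hk1 hkT
  have hge : 1 / ℓ k ≤ η k := by
    rcases hk1.eq_or_lt with rfl | hk
    · exact hη1.ge
    · rw [hηk k hk hkT]
      exact one_div_le_one_div_two_mul_add_sqrt hℓk
        (div_nonneg (mul_nonneg (sq_nonneg _) (hℓ (k - 1) (by omega) (by omega)).le) hℓk.le)
  exact ⟨le_trans (by positivity) hge, (div_le_iff₀ hℓk).1 hge⟩

namespace EuclideanSpace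

variable {ι : Type*} [Fintype ι]

theorem sum_sq_div_pos {W : ι → ℝ} (hW : ∀ i, 0 < W i) {v : EuclideanSpace ℝ ι} (hv : v ≠ 0) :
    0 < ∑ i, v i ^ 2 / W i := by
  obtain ⟨i, hi⟩ : ∃ i, v i ≠ 0 := by
    by_contra! h
    exact hv (PiLp.ext h)
  exact Finset.sum_pos' (fun j _ => div_nonneg (sq_nonneg _) (hW j).le)
    ⟨i, Finset.mem_univ i, div_pos (by positivity) (hW i)⟩

theorem inner_le_half_sum_div_add_half_sum_mul {W : ι → ℝ} (hW : ∀ i, 0 < W i)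
    (g v : EuclideanSpace ℝ ι) :
    ⟪g, v⟫ ≤ 1 / 2 * ∑ i, g i ^ 2 / W i + 1 / 2 * ∑ i, W i * v i ^ 2 := by
  rw [PiLp.inner_apply, Finset.mul_sum, Finset.mul_sum, ← Finset.sum_add_distrib]
  refine Finset.sum_le_sum fun i _ => ?_
  have hWi := hW i
  have : 1 / 2 * (g i ^ 2 / W i) + 1 / 2 * (W i * v i ^ 2) - ⟪g i, v i⟫
      = (g i - W i * v i) ^ 2 / (2 * W i) := by
    simp only [RCLike.inner_apply, conj_trivial]
    field_simp
    ring
  nlinarith [div_nonneg (sq_nonneg (g i - W i * v i)) (by positivity : (0 : ℝ) ≤ 2 * W i)]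

theorem sum_smul_sq_div (c : ℝ) (v : EuclideanSpace ℝ ι) (W : ι → ℝ) :
    ∑ i, (c • v) i ^ 2 / W i = c ^ 2 * ∑ i, v i ^ 2 / W i := by
  simp only [PiLp.smul_apply, smul_eq_mul, Finset.mul_sum]
  exact Finset.sum_congr rfl fun i _ => by ring

theorem inner_sub_le_of_isMinOn {C : Set (EuclideanSpace ℝ ι)} (hC : Convex ℝ C)
    {W : ι → ℝ} (hW : ∀ i, 0 < W i) {g z z' u : EuclideanSpace ℝ ι} (hz' : z' ∈ C) (hu : u ∈ C)
    (hmin : IsMinOn (fun w => ⟪g, w - z⟫ + 1 / 2 * ∑ i, W i * (w i - z i) ^ 2) C z') :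
    ⟪g, z - u⟫ ≤ 1 / 2 * ∑ i, W i * (u i - z i) ^ 2 - 1 / 2 * ∑ i, W i * (u i - z' i) ^ 2
      + 1 / 2 * ∑ i, g i ^ 2 / W i := by
  let Q : QuadraticMap ℝ (EuclideanSpace ℝ ι) ℝ :=
    (1 / 2 : ℝ) • (QuadraticMap.weightedSumSquares ℝ W).comp
      (EuclideanSpace.equiv ι ℝ).toLinearEquiv.toLinearMap
  have hQ : ∀ v w, Q (v - w) = 1 / 2 * ∑ i, W i * (v i - w i) ^ 2 := fun v w => by
    simp [Q, sq]
  have hthree := (convexOn_inner_sub hC g z).add_map_sub_le_of_isMinOn Q hz' hu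
    (by simpa only [hQ] using hmin)
  have hyoung := inner_le_half_sum_div_add_half_sum_mul hW g (z - z')
  simp only [hQ] at hthree
  simp only [PiLp.sub_apply] at hyoung
  have hsymm : ∑ i, W i * (z i - z' i) ^ 2 = ∑ i, W i * (z' i - z i) ^ 2 :=
    Finset.sum_congr rfl fun i _ => by ring
  have hsplit : ⟪g, z - u⟫ = ⟪g, z - z'⟫ + ⟪g, z' - z⟫ - ⟪g, u - z⟫ := by
    simp only [inner_sub_right]; ring
  linarith

theorem sum_mul_sq_sub_le {C : Set (EuclideanSpace ℝ ι)} {D : ℝ}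
    (hD : ∀ a ∈ C, ∀ b ∈ C, ∀ i, (a i - b i) ^ 2 ≤ D) {a b : EuclideanSpace ℝ ι}
    (ha : a ∈ C) (hb : b ∈ C) {W : ι → ℝ} (hW : ∀ i, 0 ≤ W i) :
    ∑ i, W i * (a i - b i) ^ 2 ≤ D * ∑ i, W i := by
  rw [Finset.mul_sum]
  exact Finset.sum_le_sum fun i _ => by
    rw [mul_comm D]; exact mul_le_mul_of_nonneg_left (hD a ha b hb i) (hW i)

theorem sum_Icc_weighted_dist_sub_le {C : Set (EuclideanSpace ℝ ι)} {D δ : ℝ}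
    (hD : ∀ a ∈ C, ∀ b ∈ C, ∀ i, (a i - b i) ^ 2 ≤ D) {T : ℕ} (hT : 1 ≤ T)
    {s : ℕ → ι → ℝ} (hs1 : ∀ i, 0 ≤ s 1 i + δ)
    (hsmono : ∀ k, 1 ≤ k → k < T → ∀ i, s k i ≤ s (k + 1) i)
    {z : ℕ → EuclideanSpace ℝ ι} (hz : ∀ k, 1 ≤ k → k ≤ T + 1 → z k ∈ C)
    {u : EuclideanSpace ℝ ι} (hu : u ∈ C) :
    ∑ k ∈ Finset.Icc 1 T, (1 / 2 * ∑ i, (s k i + δ) * (u i - z k i) ^ 2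
        - 1 / 2 * ∑ i, (s k i + δ) * (u i - z (k + 1) i) ^ 2)
      ≤ D / 2 * (∑ i, s T i + δ * Fintype.card ι) := by
  have hsnonneg : ∀ k, 1 ≤ k → k ≤ T → ∀ i, 0 ≤ s k i + δ := by
    intro k hk1 hkT i
    induction k, hk1 using Nat.le_induction with
    | base => exact hs1 i
    | succ k hk ih => linarith [ih (by omega), hsmono k hk (by omega) i]
  refine sum_Icc_sub_le_of_succ_sub_le (a := fun k => 1 / 2 * ∑ i, (s k i + δ) * (u i - z k i) ^ 2)
    (b := fun k => 1 / 2 * ∑ i, (s k i + δ) * (u i - z (k + 1) i) ^ 2)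
    (B := fun k => D / 2 * (∑ i, s k i + δ * Fintype.card ι)) hT ?_ (fun k hk1 hkT => ?_) ?_
  · have := sum_mul_sq_sub_le hD hu (hz 1 le_rfl (by omega)) (hsnonneg 1 le_rfl hT)
    simp only [Finset.sum_add_distrib, Finset.sum_const, Finset.card_univ, nsmul_eq_mul] at this
    linarith
  · have := sum_mul_sq_sub_le hD hu (hz (k + 1) (by omega) (by omega))
      (W := fun i => s (k + 1) i - s k i) fun i => sub_nonneg.2 (hsmono k hk1 hkT i)
    simp only [Finset.sum_sub_distrib, sub_mul] at this
    simp only [add_mul, Finset.sum_add_distrib]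
    linarith
  · exact mul_nonneg (by norm_num) (Finset.sum_nonneg fun i _ =>
      mul_nonneg (hsnonneg T hT le_rfl i) (sq_nonneg _))

end EuclideanSpace

theorem forall_mem_of_succ_mem {α : Type*} {C : Set α} {v : ℕ → α} {T : ℕ} (h1 : v 1 ∈ C)
    (hsucc : ∀ k, 1 ≤ k → k ≤ T → v (k + 1) ∈ C) : ∀ k, 1 ≤ k → k ≤ T + 1 → v k ∈ C := by
  intro k hk1 hkT
  obtain _ | _ | j := k
  · omega
  · exact h1
  · exact hsucc (j + 1) (by omega) (by omega)

theorem flag_step_le {ι : Type*} [Fintype ι] {C : Set (EuclideanSpace ℝ ι)} (hC : Convex ℝ C)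
    {f h : EuclideanSpace ℝ ι → ℝ} {f' : EuclideanSpace ℝ ι → EuclideanSpace ℝ ι} {L : ℝ}
    (hL : 0 < L) (hf : ConvexOn ℝ C f) (hfg : ∀ v, HasGradientAt f (f' v) v)
    (hfL : ∀ a ∈ C, ∀ b ∈ C, ‖f' a - f' b‖ ≤ L * ‖a - b‖) (hh : ConvexOn ℝ C h)
    {x y y' z z' p g u : EuclideanSpace ℝ ι} {W : ι → ℝ} {η ℓ ε : ℝ}
    (hx : x ∈ C) (hy : y ∈ C) (hy' : y' ∈ C) (hz' : z' ∈ C) (hu : u ∈ C)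
    (hprox : IsMinOn (fun w => h w + ⟪f' x, w - x⟫ + L / 2 * ‖w - x‖ ^ 2) C y')
    (hp : p = -L • (y' - x)) (hg : g = ‖p‖⁻¹ • p) (hW : ∀ i, 0 < W i)
    (hℓ : ℓ = L * ∑ i, g i ^ 2 / W i) (hη : 0 ≤ η) (hηℓ : 1 ≤ η * ℓ)
    (hmirror : IsMinOn (fun w => ⟪η • p, w - z⟫ + 1 / 2 * ∑ i, W i * (w i - z i) ^ 2) C z')
    (hbs : ⟪p, x - z⟫ ≤ (η * ℓ - 1) * ⟪p, y - x⟫ + ε) :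
    (η - η ^ 2 * ℓ) * (f y + h y) - η * (f u + h u) + η ^ 2 * ℓ * (f y' + h y')
      ≤ η * ε + (1 / 2 * ∑ i, W i * (u i - z i) ^ 2 - 1 / 2 * ∑ i, W i * (u i - z' i) ^ 2) := by
  have hdual : 1 / 2 * ∑ i, (η • p) i ^ 2 / W i = η ^ 2 * ℓ * (‖p‖ ^ 2 / (2 * L)) := by
    have hpg : p = ‖p‖ • g := by
      rcases eq_or_ne p 0 with rfl | hp0
      · simp
      · rw [hg, smul_smul, mul_inv_cancel₀ (norm_ne_zero_iff.2 hp0), one_smul]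
    rw [EuclideanSpace.sum_smul_sq_div, hpg, EuclideanSpace.sum_smul_sq_div, ← hpg, hℓ]
    field_simp
  have hmd := EuclideanSpace.inner_sub_le_of_isMinOn hC hW hz' hu hmirror
  rw [hdual, real_inner_smul_left] at hmd
  have hprox' := fun w (hw : w ∈ C) => proxGradient_le hC hL hf hfg hfL hh hx hy' hw hprox hp
  exact linearCoupling_le (F := f + h) (hprox' u hu) (hprox' y hy) hbs hmd hη hηℓ

theorem flag_master_theorem_general
    {d : ℕ} (T : ℕ) (hT : 1 ≤ T)
    (C : Set (EuclideanSpace ℝ (Fin d)))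
    (hCconv : Convex ℝ C)
    (D L δ : ℝ) (hL : 0 < L) (hδ : 0 < δ)
    (hD : ∀ a ∈ C, ∀ b ∈ C, ∀ i : Fin d, (a i - b i) ^ 2 ≤ D)
    (f h : EuclideanSpace ℝ (Fin d) → ℝ)
    (f' : EuclideanSpace ℝ (Fin d) → EuclideanSpace ℝ (Fin d))
    (hfconv : ConvexOn ℝ Set.univ f) (hhconv : ConvexOn ℝ Set.univ h)
    (hfdiff : ∀ v, HasGradientAt f (f' v) v)
    (hflip : ∀ a ∈ C, ∀ b ∈ C, ‖f' a - f' b‖ ≤ L * ‖a - b‖)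
    (F : EuclideanSpace ℝ (Fin d) → ℝ) (hF : ∀ v, F v = f v + h v)
    (x y z p g : ℕ → EuclideanSpace ℝ (Fin d))
    (s : ℕ → Fin d → ℝ) (Lk η : ℕ → ℝ)
    (hinit : x 1 = y 1 ∧ y 1 = z 1)
    (hxC : ∀ k, 1 ≤ k → k ≤ T → x k ∈ C)
    -- `y (k+1) = prox (x k)`: it is the minimizer over `C` of the prox objective at `x k`
    (hproxstep : ∀ k, 1 ≤ k → k ≤ T → y (k + 1) ∈ C ∧ ∀ w ∈ C,
      h (y (k + 1)) + ⟪f' (x k), y (k + 1) - x k⟫ + L / 2 * ‖y (k + 1) - x k‖ ^ 2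
        ≤ h w + ⟪f' (x k), w - x k⟫ + L / 2 * ‖w - x k‖ ^ 2)
    (hp : ∀ k, 1 ≤ k → k ≤ T → p k = -L • (y (k + 1) - x k))
    (hpne : ∀ k, 1 ≤ k → k ≤ T → p k ≠ 0)
    (hg : ∀ k, 1 ≤ k → k ≤ T → g k = ‖p k‖⁻¹ • p k)
    (hs : ∀ k, 1 ≤ k → k ≤ T → ∀ i : Fin d,
      s k i = Real.sqrt (∑ j ∈ Finset.Icc 1 k, g j i ^ 2))
    -- `L_k = L · g_kᵀ S_k⁻¹ g_k` with `S_k = diag(s_k) + δ I`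
    (hLk : ∀ k, 1 ≤ k → k ≤ T → Lk k = L * ∑ i : Fin d, g k i ^ 2 / (s k i + δ))
    (hη1 : η 1 = 1 / Lk 1)
    (hηk : ∀ k, 2 ≤ k → k ≤ T →
      η k = 1 / (2 * Lk k)
        + Real.sqrt (1 / (4 * Lk k ^ 2) + η (k - 1) ^ 2 * Lk (k - 1) / Lk k))
    -- mirror-descent step: `z (k+1)` minimizes `⟨η_k p_k, z − z_k⟩ + ½‖z − z_k‖²_{S_k}`
    (hmirror : ∀ k, 1 ≤ k → k ≤ T → z (k + 1) ∈ C ∧ ∀ w ∈ C,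
      ⟪η k • p k, z (k + 1) - z k⟫
          + 1 / 2 * ∑ i : Fin d, (s k i + δ) * (z (k + 1) i - z k i) ^ 2
        ≤ ⟪η k • p k, w - z k⟫
          + 1 / 2 * ∑ i : Fin d, (s k i + δ) * (w i - z k i) ^ 2)
    -- binary-search guarantee
    (hbs : ∀ k, 1 ≤ k → k ≤ T →
      ⟪p k, x k - z k⟫
        ≤ (η k * Lk k - 1) * ⟪p k, y k - x k⟫
          + D * L * (η k * Lk k) / (T : ℝ) ^ 3)
    (u : EuclideanSpace ℝ (Fin d)) (hu : u ∈ C) :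
    ∑ k ∈ Finset.Icc 1 T,
        (((if k = 1 then 0 else η (k - 1) ^ 2 * Lk (k - 1))
            - η k ^ 2 * Lk k + η k) * F (y k) - η k * F u)
      + η T ^ 2 * Lk T * F (y (T + 1))
    ≤ (∑ k ∈ Finset.Icc 1 T, D * L * η k ^ 2 * Lk k / (T : ℝ) ^ 3)
      + D / 2 * ((∑ i : Fin d, s T i) + δ * d) := by
  obtain rfl : F = fun v => f v + h v := funext hF
  have hyC := forall_mem_of_succ_mem (hinit.1 ▸ hxC 1 le_rfl hT)
    fun k hk1 hkT => (hproxstep k hk1 hkT).1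
  have hzC := forall_mem_of_succ_mem (hinit.2 ▸ hinit.1 ▸ hxC 1 le_rfl hT)
    fun k hk1 hkT => (hmirror k hk1 hkT).1
  have hW : ∀ k, 1 ≤ k → k ≤ T → ∀ i, 0 < s k i + δ := fun k hk1 hkT i => by
    rw [hs k hk1 hkT i]; positivity
  have hℓ : ∀ k, 1 ≤ k → k ≤ T → 0 < Lk k := fun k hk1 hkT => by
    rw [hLk k hk1 hkT, hg k hk1 hkT]
    exact mul_pos hL (EuclideanSpace.sum_sq_div_pos (hW k hk1 hkT)
      (smul_ne_zero (by simpa using hpne k hk1 hkT) (hpne k hk1 hkT)))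
  have hη := flag_stepsize_bounds hℓ hη1 hηk
  have hsmono : ∀ k, 1 ≤ k → k < T → ∀ i, s k i ≤ s (k + 1) i := fun k hk1 hkT i => by
    rw [hs k hk1 hkT.le i, hs (k + 1) (by omega) hkT i]
    exact Real.sqrt_le_sqrt (Finset.sum_le_sum_of_subset_of_nonneg
      (Finset.Icc_subset_Icc_right (by omega)) fun _ _ _ => sq_nonneg _)
  have hstep := fun k (hk1 : 1 ≤ k) (hkT : k ≤ T) =>
    flag_step_le hCconv hL (hfconv.subset (Set.subset_univ C) hCconv) hfdiff hflip
      (hhconv.subset (Set.subset_univ C) hCconv) (hxC k hk1 hkT) (hyC k hk1 (by omega))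
      (hyC (k + 1) (by omega) (by omega)) (hzC (k + 1) (by omega) (by omega)) hu
      (isMinOn_iff.2 (hproxstep k hk1 hkT).2) (hp k hk1 hkT) (hg k hk1 hkT) (hW k hk1 hkT)
      (hLk k hk1 hkT) (hη k hk1 hkT).1 (hη k hk1 hkT).2
      (isMinOn_iff.2 (hmirror k hk1 hkT).2) (hbs k hk1 hkT)
  have hsum := Finset.sum_le_sum fun k hk =>
    hstep k (Finset.mem_Icc.1 hk).1 (Finset.mem_Icc.1 hk).2
  have hε : ∑ k ∈ Finset.Icc 1 T, η k * (D * L * (η k * Lk k) / (T : ℝ) ^ 3)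
      = ∑ k ∈ Finset.Icc 1 T, D * L * η k ^ 2 * Lk k / (T : ℝ) ^ 3 :=
    Finset.sum_congr rfl fun k _ => by ring
  have htele := EuclideanSpace.sum_Icc_weighted_dist_sub_le hD hT
    (fun i => (hW 1 le_rfl hT i).le) hsmono hzC hu
  rw [Fintype.card_fin] at htele
  have hshift := sum_Icc_ite_pred_mul_add (fun k => η k ^ 2 * Lk k)
    (fun k => f (y k) + h (y k)) hT
  simp only [sub_mul, Finset.sum_add_distrib, Finset.sum_sub_distrib] at hsum htele
  simp only [add_mul, sub_mul, Finset.sum_add_distrib, Finset.sum_sub_distrib]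
  linarith

/-- **Master Theorem** (Theorem 2) for FLAG, with `η₀² L₀` interpreted as `0`
and `∑ᵢ s_T(i) + δ d` the trace of `S_T = diag(s_T) + δ I`. -/
theorem flag_master_theorem
    {d : ℕ} (hd : 1 ≤ d) (T : ℕ) (hT : 1 ≤ T)
    (C : Set (EuclideanSpace ℝ (Fin d)))
    (hCconv : Convex ℝ C) (hCclosed : IsClosed C)
    (D L δ : ℝ) (hL : 0 < L) (hδ : 0 < δ) (hD0 : 0 ≤ D)
    (hD : ∀ a ∈ C, ∀ b ∈ C, ∀ i : Fin d, (a i - b i) ^ 2 ≤ D)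
    (f h : EuclideanSpace ℝ (Fin d) → ℝ)
    (f' : EuclideanSpace ℝ (Fin d) → EuclideanSpace ℝ (Fin d))
    (hfconv : ConvexOn ℝ Set.univ f) (hhconv : ConvexOn ℝ Set.univ h)
    (hfdiff : ∀ v, HasGradientAt f (f' v) v)
    (hflip : ∀ a ∈ C, ∀ b ∈ C, ‖f' a - f' b‖ ≤ L * ‖a - b‖)
    (F : EuclideanSpace ℝ (Fin d) → ℝ) (hF : ∀ v, F v = f v + h v)
    (x y z p g : ℕ → EuclideanSpace ℝ (Fin d))
    (s : ℕ → Fin d → ℝ) (Lk η : ℕ → ℝ)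
    (hinit : x 1 = y 1 ∧ y 1 = z 1)
    (hxC : ∀ k, 1 ≤ k → k ≤ T → x k ∈ C)
    -- `y (k+1) = prox (x k)`: it is the minimizer over `C` of the prox objective at `x k`
    (hproxstep : ∀ k, 1 ≤ k → k ≤ T → y (k + 1) ∈ C ∧ ∀ w ∈ C,
      h (y (k + 1)) + ⟪f' (x k), y (k + 1) - x k⟫ + L / 2 * ‖y (k + 1) - x k‖ ^ 2
        ≤ h w + ⟪f' (x k), w - x k⟫ + L / 2 * ‖w - x k‖ ^ 2)
    (hp : ∀ k, 1 ≤ k → k ≤ T → p k = -L • (y (k + 1) - x k))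
    (hpne : ∀ k, 1 ≤ k → k ≤ T → p k ≠ 0)
    (hg : ∀ k, 1 ≤ k → k ≤ T → g k = ‖p k‖⁻¹ • p k)
    (hs : ∀ k, 1 ≤ k → k ≤ T → ∀ i : Fin d,
      s k i = Real.sqrt (∑ j ∈ Finset.Icc 1 k, g j i ^ 2))
    -- `L_k = L · g_kᵀ S_k⁻¹ g_k` with `S_k = diag(s_k) + δ I`
    (hLk : ∀ k, 1 ≤ k → k ≤ T → Lk k = L * ∑ i : Fin d, g k i ^ 2 / (s k i + δ))
    (hη1 : η 1 = 1 / Lk 1)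
    (hηk : ∀ k, 2 ≤ k → k ≤ T →
      η k = 1 / (2 * Lk k)
        + Real.sqrt (1 / (4 * Lk k ^ 2) + η (k - 1) ^ 2 * Lk (k - 1) / Lk k))
    -- mirror-descent step: `z (k+1)` minimizes `⟨η_k p_k, z − z_k⟩ + ½‖z − z_k‖²_{S_k}`
    (hmirror : ∀ k, 1 ≤ k → k ≤ T → z (k + 1) ∈ C ∧ ∀ w ∈ C,
      ⟪η k • p k, z (k + 1) - z k⟫
          + 1 / 2 * ∑ i : Fin d, (s k i + δ) * (z (k + 1) i - z k i) ^ 2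
        ≤ ⟪η k • p k, w - z k⟫
          + 1 / 2 * ∑ i : Fin d, (s k i + δ) * (w i - z k i) ^ 2)
    -- binary-search guarantee
    (hbs : ∀ k, 1 ≤ k → k ≤ T →
      ⟪p k, x k - z k⟫
        ≤ (η k * Lk k - 1) * ⟪p k, y k - x k⟫
          + D * L * (η k * Lk k) / (T : ℝ) ^ 3)
    (u : EuclideanSpace ℝ (Fin d)) (hu : u ∈ C) :
    ∑ k ∈ Finset.Icc 1 T,
        (((if k = 1 then 0 else η (k - 1) ^ 2 * Lk (k - 1))
            - η k ^ 2 * Lk k + η k) * F (y k) - η k * F u)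
      + η T ^ 2 * Lk T * F (y (T + 1))
    ≤ (∑ k ∈ Finset.Icc 1 T, D * L * η k ^ 2 * Lk k / (T : ℝ) ^ 3)
      + D / 2 * ((∑ i : Fin d, s T i) + δ * d) :=
  flag_master_theorem_general T hT C hCconv D L δ hL hδ hD f h f' hfconv hhconv hfdiff hflip F hF x
    y z p g s Lk η hinit hxC hproxstep hp hpne hg hs hLk hη1 hηk hmirror hbs u hu
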